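/- Let the descriptor system (E,A,B,C,D) be completely observable. Then every matrix Q ∈ ℝ^{n×n} such that [[A^T Q + Q^T A, Q^T B − C^T],[B^T Q − C, −D − D^T]] is negative semidefinite and E^T Q is symmetric positive semidefinite is invertible; consequently, the system is port-Hamiltonian if and only if there exists Q ∈ ℝ^{n×n} satisfying the KYP inequality together with E^T Q symmetric positive semidefinite. -/

import Mathlib

/-! If `Q x = 0`, the quadratic form of `-KYP` vanishes at `(x, 0)`, so positive semidefiniteness
forces `Qᵀ A x = 0` and `C x = 0`, while symmetry of `Eᵀ Q` gives `Qᵀ E x = 0`. Hence `E` and `A`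
map `ker Q` into `ker Qᵀ`, a space of the same dimension, and over `ℂ` the restricted pencil
`αE - βA` has a kernel vector for some `(α, β) ≠ (0, 0)`: a kernel vector of `E`, or an eigenvector
of `E⁻¹ A`. That vector is also killed by `C`, contradicting complete observability, so `Q` is
invertible.

For the equivalence, any pH decomposition gives `-KYP = W + Wᵀ` with `W` the dissipation matrix.
Conversely, for invertible `Q` split `A Q⁻¹` into its skew and symmetric parts `J` and `-R`; then
`W` is symmetric, so `W = -KYP / 2`. -/

open Matrix
open scoped ComplexOrder

/-- View a real matrix as a complex matrix. -/
noncomputable def toC {k l : Type*} (M : Matrix k l ℝ) : Matrix k l ℂ :=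
  M.map (fun x => (x : ℂ))

/-- The matrix pencil `s E - A`, viewed over `ℂ`. -/
noncomputable def pencil {n : ℕ} (E A : Matrix (Fin n) (Fin n) ℝ) (s : ℂ) :
    Matrix (Fin n) (Fin n) ℂ :=
  s • toC E - toC A

/-- The transfer function `T(s) = C (sE - A)⁻¹ B + D` of the descriptor system. -/
noncomputable def transfer {n m : ℕ} (E A : Matrix (Fin n) (Fin n) ℝ)
    (B : Matrix (Fin n) (Fin m) ℝ) (C : Matrix (Fin m) (Fin n) ℝ)
    (D : Matrix (Fin m) (Fin m) ℝ) (s : ℂ) : Matrix (Fin m) (Fin m) ℂ :=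
  toC C * (pencil E A s)⁻¹ * toC B + toC D

/-- A descriptor system is positive real if the pencil is invertible on the open right
half-plane and `T(s) + T(s)ᴴ` is positive semidefinite there. -/
def PositiveReal {n m : ℕ} (E A : Matrix (Fin n) (Fin n) ℝ)
    (B : Matrix (Fin n) (Fin m) ℝ) (C : Matrix (Fin m) (Fin n) ℝ)
    (D : Matrix (Fin m) (Fin m) ℝ) : Prop :=
  ∀ s : ℂ, 0 < s.re → (pencil E A s).det ≠ 0 ∧
    (transfer E A B C D s + (transfer E A B C D s)ᴴ).PosSemidef

/-- Complete controllability: `[αE - βA, B]` has full row rank for all `(α,β) ≠ (0,0)`. -/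
def CompletelyControllable {n m : ℕ} (E A : Matrix (Fin n) (Fin n) ℝ)
    (B : Matrix (Fin n) (Fin m) ℝ) : Prop :=
  ∀ α β : ℂ, ¬(α = 0 ∧ β = 0) →
    (fromCols (α • toC E - β • toC A) (toC B)).rank = n

/-- Complete observability: `[αE - βA; C]` has full column rank for all `(α,β) ≠ (0,0)`. -/
def CompletelyObservable {n m : ℕ} (E A : Matrix (Fin n) (Fin n) ℝ)
    (C : Matrix (Fin m) (Fin n) ℝ) : Prop :=
  ∀ α β : ℂ, ¬(α = 0 ∧ β = 0) →
    (fromRows (α • toC E - β • toC A) (toC C)).rank = n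

/-- A descriptor system `(E,A,B,C,D)` is port-Hamiltonian if it admits a pH decomposition. -/
def IsPortHamiltonian {n m : ℕ} (E A : Matrix (Fin n) (Fin n) ℝ)
    (B : Matrix (Fin n) (Fin m) ℝ) (C : Matrix (Fin m) (Fin n) ℝ)
    (D : Matrix (Fin m) (Fin m) ℝ) : Prop :=
  ∃ (J R Q : Matrix (Fin n) (Fin n) ℝ) (G P : Matrix (Fin n) (Fin m) ℝ),
    A = (J - R) * Q ∧ B = G - P ∧ C = (G + P)ᵀ * Q ∧ Jᵀ = -J ∧
    (Eᵀ * Q).PosSemidef ∧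
    (fromBlocks (Qᵀ * R * Q) (Qᵀ * P) (Pᵀ * Q) ((1/2 : ℝ) • (D + Dᵀ))).PosSemidef

/-- The KYP block matrix `[[AᵀQ + QᵀA, QᵀB - Cᵀ], [BᵀQ - C, -D - Dᵀ]]`. -/
def KYPmatrix {n m : ℕ} (A : Matrix (Fin n) (Fin n) ℝ)
    (B : Matrix (Fin n) (Fin m) ℝ) (C : Matrix (Fin m) (Fin n) ℝ)
    (D : Matrix (Fin m) (Fin m) ℝ) (Q : Matrix (Fin n) (Fin n) ℝ) :
    Matrix (Fin n ⊕ Fin m) (Fin n ⊕ Fin m) ℝ :=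
  fromBlocks (Aᵀ * Q + Qᵀ * A) (Qᵀ * B - Cᵀ) (Bᵀ * Q - C) (-D - Dᵀ)

section toC

variable {k l p : Type*}

@[simp] lemma toC_mul [Fintype l] (M : Matrix k l ℝ) (N : Matrix l p ℝ) :
    toC (M * N) = toC M * toC N :=
  Matrix.map_mul (f := Complex.ofRealHom)

@[simp] lemma toC_add (M N : Matrix k l ℝ) : toC (M + N) = toC M + toC N := by
  ext i j; simp [toC]

@[simp] lemma toC_neg (M : Matrix k l ℝ) : toC (-M) = -toC M := by
  ext i j; simp [toC]

@[simp] lemma toC_sub (M N : Matrix k l ℝ) : toC (M - N) = toC M - toC N := by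
  ext i j; simp [toC]

lemma toC_fromBlocks {k' l' : Type*} (M₁₁ : Matrix k l ℝ) (M₁₂ : Matrix k l' ℝ)
    (M₂₁ : Matrix k' l ℝ) (M₂₂ : Matrix k' l' ℝ) :
    toC (fromBlocks M₁₁ M₁₂ M₂₁ M₂₂) = fromBlocks (toC M₁₁) (toC M₁₂) (toC M₂₁) (toC M₂₂) :=
  fromBlocks_map ..

lemma toC_conjTranspose (M : Matrix k l ℝ) : (toC M)ᴴ = toC Mᵀ := by
  ext i j; simp [toC]

lemma toC_det [Fintype k] [DecidableEq k] (M : Matrix k k ℝ) : (toC M).det = M.det :=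
  (RingHom.map_det Complex.ofRealHom M).symm

lemma Matrix.PosSemidef.toC [Fintype k] [DecidableEq k] {M : Matrix k k ℝ} (h : M.PosSemidef) :
    (toC M).PosSemidef := by
  obtain ⟨N, rfl⟩ : ∃ N : Matrix k k ℝ, M = Nᴴ * N := by
    open scoped MatrixOrder in
    exact CStarAlgebra.nonneg_iff_eq_star_mul_self.mp h.nonneg
  rw [toC_mul, conjTranspose_eq_transpose_of_trivial, ← toC_conjTranspose]
  exact posSemidef_conjTranspose_mul_self _

end toC

theorem Matrix.PosSemidef.fromBlocks_mulVec_eq_zero {𝕜 m n : Type*} [RCLike 𝕜] [Fintype m]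
    [Fintype n] {P₁₁ : Matrix m m 𝕜} {P₁₂ : Matrix m n 𝕜} {P₂₁ : Matrix n m 𝕜}
    {P₂₂ : Matrix n n 𝕜} (h : (fromBlocks P₁₁ P₁₂ P₂₁ P₂₂).PosSemidef) {x : m → 𝕜}
    (hx : star x ⬝ᵥ P₁₁ *ᵥ x = 0) : P₁₁ *ᵥ x = 0 ∧ P₂₁ *ᵥ x = 0 := by
  have hzero := (h.dotProduct_mulVec_zero_iff (Sum.elim x 0)).mp <| by
    simpa [fromBlocks_mulVec, Function.star_sumElim, sumElim_dotProduct_sumElim] using hx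
  simp only [fromBlocks_mulVec, mulVec_zero, add_zero, Sum.elim_comp_inl,
    Sum.elim_comp_inr] at hzero
  exact ⟨congrArg (· ∘ Sum.inl) hzero, congrArg (· ∘ Sum.inr) hzero⟩

theorem LinearMap.exists_ne_zero_smul_sub_smul_apply_eq_zero {K V W : Type*} [Field K]
    [IsAlgClosed K] [AddCommGroup V] [Module K V] [FiniteDimensional K V] [Nontrivial V]
    [AddCommGroup W] [Module K W] [FiniteDimensional K W]
    (hdim : Module.finrank K V = Module.finrank K W) (e a : V →ₗ[K] W) :
    ∃ α β : K, ¬(α = 0 ∧ β = 0) ∧ ∃ v ≠ 0, α • e v - β • a v = 0 := by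
  by_cases he : Function.Injective e
  · let e' := e.linearEquivOfInjective he hdim
    obtain ⟨μ, hμ⟩ := Module.End.exists_eigenvalue (e'.symm.toLinearMap ∘ₗ a)
    obtain ⟨v, hv⟩ := hμ.exists_hasEigenvector
    refine ⟨μ, 1, by simp, v, hv.2, ?_⟩
    have hav : a v = e' (μ • v) := e'.eq_symm_apply.mp hv.apply_eq_smul.symm |>.symm
    rw [hav, map_smul, one_smul, sub_eq_zero]
    rfl
  · obtain ⟨v, hv, hv0⟩ := Submodule.exists_mem_ne_zero_of_ne_bot (mt LinearMap.ker_eq_bot.mp he)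
    exact ⟨1, 0, by simp, v, hv0, by simpa using hv⟩

theorem Matrix.finrank_ker_mulVecLin_transpose {K ι : Type*} [Field K] [Fintype ι]
    (M : Matrix ι ι K) : Module.finrank K (LinearMap.ker Mᵀ.mulVecLin) =
      Module.finrank K (LinearMap.ker M.mulVecLin) := by
  have hM := LinearMap.finrank_range_add_finrank_ker M.mulVecLin
  have hMt := LinearMap.finrank_range_add_finrank_ker Mᵀ.mulVecLin
  have hrank : Mᵀ.rank = M.rank := rank_transpose M
  unfold Matrix.rank at hrank
  omega

theorem Matrix.eq_zero_of_rank_eq_of_mulVec_eq_zero {K ι κ : Type*} [Field K] [Fintype ι]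
    [Fintype κ] {M : Matrix κ ι K} (hM : M.rank = Fintype.card ι) {x : ι → K}
    (hx : M *ᵥ x = 0) : x = 0 := by
  have hker := LinearMap.finrank_range_add_finrank_ker M.mulVecLin
  rw [Module.finrank_fintype_fun_eq_card, ← Matrix.rank, hM, add_eq_left,
    Submodule.finrank_eq_zero] at hker
  simpa [hker] using (show x ∈ LinearMap.ker M.mulVecLin from hx)

section descriptor

variable {n m : ℕ} {E A : Matrix (Fin n) (Fin n) ℝ} {B : Matrix (Fin n) (Fin m) ℝ}
  {C : Matrix (Fin m) (Fin n) ℝ} {D : Matrix (Fin m) (Fin m) ℝ} {Q : Matrix (Fin n) (Fin n) ℝ}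

theorem CompletelyObservable.eq_zero (hobs : CompletelyObservable E A C) {α β : ℂ}
    (hαβ : ¬(α = 0 ∧ β = 0)) {x : Fin n → ℂ} (hpencil : (α • toC E - β • toC A) *ᵥ x = 0)
    (hC : toC C *ᵥ x = 0) : x = 0 :=
  eq_zero_of_rank_eq_of_mulVec_eq_zero (by simpa using hobs α β hαβ)
    (by rw [fromRows_mulVec, hpencil, hC, Sum.elim_zero_zero])

theorem mulVec_eq_zero_of_KYP (hK : (-(KYPmatrix A B C D Q)).PosSemidef)
    {x : Fin n → ℂ} (hx : toC Q *ᵥ x = 0) : toC Qᵀ *ᵥ (toC A *ᵥ x) = 0 ∧ toC C *ᵥ x = 0 := by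
  have hKC := hK.toC
  rw [KYPmatrix, fromBlocks_neg, toC_fromBlocks] at hKC
  have h₁₁ : toC (-(Aᵀ * Q + Qᵀ * A)) *ᵥ x = -(toC Qᵀ *ᵥ (toC A *ᵥ x)) := by
    rw [toC_neg, neg_mulVec, toC_add, add_mulVec, toC_mul, toC_mul, ← mulVec_mulVec,
      ← mulVec_mulVec, hx, mulVec_zero, zero_add]
  have h₂₁ : toC (-(Bᵀ * Q - C)) *ᵥ x = toC C *ᵥ x := by
    rw [neg_sub, toC_sub, sub_mulVec, toC_mul, ← mulVec_mulVec, hx, mulVec_zero, sub_zero]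
  have hform : star x ⬝ᵥ toC (-(Aᵀ * Q + Qᵀ * A)) *ᵥ x = 0 := by
    rw [h₁₁, dotProduct_neg, ← toC_conjTranspose, dotProduct_mulVec, ← star_mulVec, hx,
      star_zero, zero_dotProduct, neg_zero]
  obtain ⟨hA, hC⟩ := hKC.fromBlocks_mulVec_eq_zero hform
  rw [h₁₁, neg_eq_zero] at hA
  rw [h₂₁] at hC
  exact ⟨hA, hC⟩

theorem transpose_mulVec_mulVec_eq_zero_of_isHermitian (hEQ : (Eᵀ * Q).IsHermitian)
    {x : Fin n → ℂ} (hx : toC Q *ᵥ x = 0) : toC Qᵀ *ᵥ (toC E *ᵥ x) = 0 := by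
  have hsym : Qᵀ * E = Eᵀ * Q := by
    rw [← hEQ.eq, conjTranspose_eq_transpose_of_trivial, transpose_mul, transpose_transpose]
  rw [mulVec_mulVec, ← toC_mul, hsym, toC_mul, ← mulVec_mulVec, hx, mulVec_zero]

theorem isUnit_of_KYP (hobs : CompletelyObservable E A C)
    (hK : (-(KYPmatrix A B C D Q)).PosSemidef) (hEQ : (Eᵀ * Q).PosSemidef) : IsUnit Q := by
  by_contra hQ
  let K := LinearMap.ker (toC Q).mulVecLin
  let K' := LinearMap.ker (toC Qᵀ).mulVecLin
  have hK_ne_bot : K ≠ ⊥ := by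
    obtain ⟨v, hv0, hv⟩ := (exists_mulVec_eq_zero_iff (M := toC Q)).mpr <| by
      rwa [toC_det, Complex.ofReal_eq_zero, ← isUnit_iff_ne_zero.not_left,
        ← isUnit_iff_isUnit_det]
    exact fun h => hv0 (ker_mulVecLin_eq_bot_iff.mp h v hv)
  have : Nontrivial K := Submodule.nontrivial_iff_ne_bot.mpr hK_ne_bot
  let φE : K →ₗ[ℂ] K' := (toC E).mulVecLin.restrict fun _ hx =>
    transpose_mulVec_mulVec_eq_zero_of_isHermitian hEQ.1 hx
  let φA : K →ₗ[ℂ] K' := (toC A).mulVecLin.restrict fun _ hx =>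
    (mulVec_eq_zero_of_KYP hK hx).1
  obtain ⟨α, β, hαβ, v, hv0, hv⟩ := LinearMap.exists_ne_zero_smul_sub_smul_apply_eq_zero
    (finrank_ker_mulVecLin_transpose (toC Q)).symm φE φA
  refine hv0 (Subtype.ext (hobs.eq_zero hαβ ?_ (mulVec_eq_zero_of_KYP hK v.2).2))
  rw [sub_mulVec, smul_mulVec, smul_mulVec]
  exact congrArg Subtype.val hv

end descriptor

section portHamiltonian

variable {n m : ℕ} {E A J R Q : Matrix (Fin n) (Fin n) ℝ} {B G P : Matrix (Fin n) (Fin m) ℝ}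
  {C : Matrix (Fin m) (Fin n) ℝ} {D : Matrix (Fin m) (Fin m) ℝ}

noncomputable def pHDissipation (Q R : Matrix (Fin n) (Fin n) ℝ) (P : Matrix (Fin n) (Fin m) ℝ)
    (D : Matrix (Fin m) (Fin m) ℝ) : Matrix (Fin n ⊕ Fin m) (Fin n ⊕ Fin m) ℝ :=
  fromBlocks (Qᵀ * R * Q) (Qᵀ * P) (Pᵀ * Q) ((1/2 : ℝ) • (D + Dᵀ))

theorem pHDissipation_transpose :
    (pHDissipation Q R P D)ᵀ = pHDissipation Q Rᵀ P D := by
  simp only [pHDissipation, fromBlocks_transpose, transpose_mul, transpose_transpose,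
    transpose_smul, transpose_add, Matrix.mul_assoc, add_comm Dᵀ]

theorem neg_KYPmatrix_eq_pHDissipation_add_transpose (hA : A = (J - R) * Q) (hB : B = G - P)
    (hC : C = (G + P)ᵀ * Q) (hJ : Jᵀ = -J) :
    -(KYPmatrix A B C D Q) = pHDissipation Q R P D + (pHDissipation Q R P D)ᵀ := by
  subst hA hB hC
  rw [pHDissipation_transpose, KYPmatrix, pHDissipation, pHDissipation, fromBlocks_neg,
    fromBlocks_add]
  congr 1
  · simp only [transpose_mul, transpose_sub, hJ, Matrix.sub_mul, Matrix.mul_sub, Matrix.neg_mul,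
      Matrix.mul_neg, Matrix.mul_assoc]
    abel
  · simp only [transpose_mul, transpose_add, transpose_transpose, Matrix.mul_sub, Matrix.add_mul]
    abel
  · simp only [transpose_add, transpose_sub, Matrix.add_mul, Matrix.sub_mul]
    abel
  · module

theorem IsPortHamiltonian.exists_KYP (h : IsPortHamiltonian E A B C D) :
    ∃ Q, (-(KYPmatrix A B C D Q)).PosSemidef ∧ (Eᵀ * Q).PosSemidef := by
  obtain ⟨J, R, Q, G, P, hA, hB, hC, hJ, hEQ, hW⟩ := h
  refine ⟨Q, ?_, hEQ⟩
  rw [neg_KYPmatrix_eq_pHDissipation_add_transpose hA hB hC hJ]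
  exact hW.add hW.transpose

theorem isPortHamiltonian_of_KYP (hQ : IsUnit Q) (hK : (-(KYPmatrix A B C D Q)).PosSemidef)
    (hEQ : (Eᵀ * Q).PosSemidef) : IsPortHamiltonian E A B C D := by
  have hQinv : Q⁻¹ * Q = 1 := nonsing_inv_mul Q ((isUnit_iff_isUnit_det Q).mp hQ)
  set X := A * Q⁻¹
  set Y := (C * Q⁻¹)ᵀ
  set J := (1/2 : ℝ) • (X - Xᵀ)
  set R := -((1/2 : ℝ) • (X + Xᵀ))
  set G := (1/2 : ℝ) • (Y + B)
  set P := (1/2 : ℝ) • (Y - B)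
  have hA : A = (J - R) * Q := by
    rw [show J - R = X by module, Matrix.mul_assoc, hQinv, Matrix.mul_one]
  have hB : B = G - P := by module
  have hC : C = (G + P)ᵀ * Q := by
    rw [show G + P = Y by module, transpose_transpose, Matrix.mul_assoc, hQinv, Matrix.mul_one]
  have hJ : Jᵀ = -J := by
    rw [transpose_smul, transpose_sub, transpose_transpose]
    module
  have hR : Rᵀ = R := by
    rw [transpose_neg, transpose_smul, transpose_add, transpose_transpose, add_comm]
  refine ⟨J, R, Q, G, P, hA, hB, hC, hJ, hEQ, ?_⟩
  have hsum := neg_KYPmatrix_eq_pHDissipation_add_transpose (D := D) hA hB hC hJ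
  rw [pHDissipation_transpose, hR] at hsum
  change (pHDissipation Q R P D).PosSemidef
  rw [show pHDissipation Q R P D = (1/2 : ℝ) • -(KYPmatrix A B C D Q) by rw [hsum]; module]
  exact hK.smul (by norm_num)

end portHamiltonian

/-- For a completely observable system, every KYP solution `Q` with
`EᵀQ ≥ 0` is invertible, and the system is pH iff a KYP solution exists. -/
theorem observable_KYP_invertible_and_pH_iff {n m : ℕ}
    (E A : Matrix (Fin n) (Fin n) ℝ) (B : Matrix (Fin n) (Fin m) ℝ)
    (C : Matrix (Fin m) (Fin n) ℝ) (D : Matrix (Fin m) (Fin m) ℝ)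
    (hobs : CompletelyObservable E A C) :
    (∀ Q : Matrix (Fin n) (Fin n) ℝ,
      (-(KYPmatrix A B C D Q)).PosSemidef → (Eᵀ * Q).PosSemidef → IsUnit Q) ∧
    (IsPortHamiltonian E A B C D ↔
      ∃ Q : Matrix (Fin n) (Fin n) ℝ,
        (-(KYPmatrix A B C D Q)).PosSemidef ∧ (Eᵀ * Q).PosSemidef) :=
  ⟨fun _ hK hEQ => isUnit_of_KYP hobs hK hEQ,
    IsPortHamiltonian.exists_KYP,
    fun ⟨_, hK, hEQ⟩ => isPortHamiltonian_of_KYP (isUnit_of_KYP hobs hK hEQ) hK hEQ⟩
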